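/- arXiv:1212.0025 — 9 statements merged into one kernel-verified Lean document; each statement's English description precedes it below -/
import Mathlib

section
/- For any n×n complex matrix A = (a_{ij}), the permanent of A equals the expectation over uniformly random x ∈ {-1,1}^n of the Glynn estimator Gly_x(A) := (x_1 ⋯ x_n) · ∏_{i=1}^n (a_{i,1}x_1 + ⋯ + a_{i,n}x_n). -/
/-- The sign associated to a boolean: `true ↦ -1`, `false ↦ 1`, so that
`x` ranges uniformly over `{-1,1}^n` as the boolean vector ranges over `Bool^n`. -/
def sgn (b : Bool) : ℂ := if b then -1 else 1

lemma sgn_key (n : ℕ) (f : Fin n → Fin n) :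
    (∑ e : Fin n → Bool, (∏ i, sgn (e i)) * ∏ i, sgn (e (f i)))
      = if Function.Bijective f then (2:ℂ) ^ n else 0 := by
  have hrw : ∀ e : Fin n → Bool,
      (∏ i, sgn (e i)) * ∏ i, sgn (e (f i))
        = ∏ j, sgn (e j) ^ (1 + (Finset.univ.filter (fun i => f i = j)).card) := by
    intro e
    rw [← Finset.prod_fiberwise' Finset.univ f (fun j => sgn (e j))]
    rw [← Finset.prod_mul_distrib]
    refine Finset.prod_congr rfl fun j _ => ?_
    rw [Finset.prod_const, pow_add, pow_one]
  simp only [hrw]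
  have := (Fintype.prod_sum (κ := fun _ : Fin n => Bool)
      (fun j b => sgn b ^ (1 + (Finset.univ.filter (fun i => f i = j)).card))).symm
  rw [this]
  have hfac : ∀ j : Fin n,
      (∑ b : Bool, sgn b ^ (1 + (Finset.univ.filter (fun i => f i = j)).card))
        = (-1:ℂ) ^ (1 + (Finset.univ.filter (fun i => f i = j)).card) + 1 := by
    intro j
    rw [Fintype.sum_bool]
    simp [sgn]
  simp only [hfac]
  by_cases hf : Function.Bijective f
  · rw [if_pos hf]
    have hcard : ∀ j : Fin n, (Finset.univ.filter (fun i => f i = j)).card = 1 := by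
      intro j
      obtain ⟨i, hi⟩ := hf.2 j
      rw [Finset.card_eq_one]
      refine ⟨i, ?_⟩
      ext x
      simp only [Finset.mem_filter, Finset.mem_univ, true_and, Finset.mem_singleton]
      constructor
      · intro hx; exact hf.1 (hx.trans hi.symm)
      · rintro rfl; exact hi
    have : ∀ j : Fin n,
        (-1:ℂ) ^ (1 + (Finset.univ.filter (fun i => f i = j)).card) + 1 = 2 := by
      intro j; rw [hcard j]; norm_num
    simp only [this]
    rw [Finset.prod_const, Finset.card_univ, Fintype.card_fin]
  · rw [if_neg hf]
    have hsurj : ¬ Function.Surjective f := fun h =>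
      hf (Finite.surjective_iff_bijective.mp h)
    rw [Function.Surjective] at hsurj
    push_neg at hsurj
    obtain ⟨j, hj⟩ := hsurj
    refine Finset.prod_eq_zero (Finset.mem_univ j) ?_
    have : (Finset.univ.filter (fun i => f i = j)).card = 0 := by
      rw [Finset.card_eq_zero]
      ext x; simp only [Finset.mem_filter, Finset.mem_univ, true_and,
        Finset.notMem_empty, iff_false]
      exact fun h => hj x h
    rw [this]
    norm_num

/-- **Glynn's formula / correctness of Gurvits's estimator.**  For any `n × n` complex
matrix `A`, the expectation over uniformly random `x ∈ {-1,1}^n` of the Glynn estimator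
`Gly_x(A) = x_1⋯x_n ∏_i (∑_j a_{ij} x_j)` equals the permanent `∑_σ ∏_i a_{i,σ(i)}`. -/
theorem glynn_expectation (n : ℕ) (A : Matrix (Fin n) (Fin n) ℂ) :
    (∑ e : Fin n → Bool,
        (∏ i, sgn (e i)) * ∏ i, ∑ j, A i j * sgn (e j)) / 2 ^ n
      = ∑ σ : Equiv.Perm (Fin n), ∏ i, A i (σ i) := by
  have h1 : ∀ e : Fin n → Bool,
      (∏ i, ∑ j, A i j * sgn (e j))
        = ∑ f : Fin n → Fin n, ∏ i, A i (f i) * sgn (e (f i)) :=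
    fun e => Fintype.prod_sum (fun i j => A i j * sgn (e j))
  have h2 : (∑ e : Fin n → Bool,
      (∏ i, sgn (e i)) * ∏ i, ∑ j, A i j * sgn (e j))
      = ∑ f : Fin n → Fin n, (∏ i, A i (f i)) *
          ∑ e : Fin n → Bool, (∏ i, sgn (e i)) * ∏ i, sgn (e (f i)) := by
    simp only [h1, Finset.mul_sum]
    rw [Finset.sum_comm]
    refine Finset.sum_congr rfl fun f _ => ?_
    refine Finset.sum_congr rfl fun e _ => ?_
    rw [Finset.prod_mul_distrib]
    ring
  rw [h2]
  simp only [sgn_key, mul_ite, mul_zero]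
  rw [Finset.sum_ite, Finset.sum_const_zero, add_zero]
  have h3 : ∑ f ∈ Finset.univ.filter (fun f : Fin n → Fin n => Function.Bijective f),
      (∏ i, A i (f i)) * (2:ℂ) ^ n
      = (∑ σ : Equiv.Perm (Fin n), ∏ i, A i (σ i)) * 2 ^ n := by
    rw [← Finset.sum_mul]
    congr 1
    refine Finset.sum_bij' (fun f hf => Equiv.ofBijective f (Finset.mem_filter.mp hf).2)
      (fun σ _ => (σ : Fin n → Fin n)) ?_ ?_ ?_ ?_ ?_
    · intro f hf
      exact Finset.mem_univ _
    · intro σ _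
      exact Finset.mem_filter.mpr ⟨Finset.mem_univ _, σ.bijective⟩
    · intro f hf
      rfl
    · intro σ _
      ext i; rfl
    · intro f hf
      rfl
  rw [h3]
  have h2n : (2:ℂ) ^ n ≠ 0 := pow_ne_zero n two_ne_zero
  field_simp
end

section
/- For any n×n complex matrix A and any x ∈ {-1,1}^n, the absolute value of the Glynn estimator satisfies |Gly_x(A)| ≤ ‖A‖^n, where ‖A‖ is the operator (spectral) norm of A. -/
/-- The operator (spectral) 2-norm of a complex matrix. -/
noncomputable def opNorm {m k : ℕ} (A : Matrix (Fin m) (Fin k) ℂ) : ℝ :=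
  ‖LinearMap.toContinuousLinearMap (Matrix.toEuclideanLin A)‖

/-!
With `y = A x`, the Glynn estimator has modulus `∏ |y i|` because every `|x i| = 1`.
By AM-GM, `∏ |y i|² ≤ (‖y‖² / n)ⁿ`, and `‖y‖² ≤ ‖A‖² ‖x‖² = ‖A‖² n`.
-/

open Finset Matrix

theorem Real.prod_le_sum_div_card_pow {ι : Type*} (s : Finset ι) (f : ι → ℝ)
    (hf : ∀ i ∈ s, 0 ≤ f i) :
    ∏ i ∈ s, f i ≤ ((∑ i ∈ s, f i) / #s) ^ #s := by
  rcases s.eq_empty_or_nonempty with rfl | hs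
  · simp
  have hcard : (#s : ℝ) ≠ 0 := Nat.cast_ne_zero.mpr hs.card_ne_zero
  have amgm := Real.geom_mean_le_arith_mean_weighted s (fun _ ↦ (#s : ℝ)⁻¹) f
    (fun _ _ ↦ by positivity) (by simp [hcard]) hf
  rw [Real.finsetProd_rpow s f hf, ← Finset.mul_sum, inv_mul_eq_div] at amgm
  calc ∏ i ∈ s, f i = ((∏ i ∈ s, f i) ^ (#s : ℝ)⁻¹) ^ #s :=
        (Real.rpow_inv_natCast_pow (prod_nonneg hf) hs.card_ne_zero).symm
    _ ≤ ((∑ i ∈ s, f i) / #s) ^ #s :=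
      pow_le_pow_left₀ (Real.rpow_nonneg (prod_nonneg hf) _) amgm _

theorem sum_norm_sq_mulVec_le {m k : ℕ} (A : Matrix (Fin m) (Fin k) ℂ) (v : Fin k → ℂ) :
    ∑ i, ‖(A *ᵥ v) i‖ ^ 2 ≤ opNorm A ^ 2 * ∑ j, ‖v j‖ ^ 2 := by
  have h : ‖WithLp.toLp 2 (A *ᵥ v)‖ ≤ opNorm A * ‖WithLp.toLp 2 v‖ :=
    (LinearMap.toContinuousLinearMap (toEuclideanLin A)).le_opNorm (WithLp.toLp 2 v)
  have hsq := pow_le_pow_left₀ (norm_nonneg _) h 2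
  rwa [mul_pow, EuclideanSpace.norm_sq_eq, EuclideanSpace.norm_sq_eq] at hsq

theorem prod_norm_mulVec_le_opNorm_pow {n : ℕ} (A : Matrix (Fin n) (Fin n) ℂ) (v : Fin n → ℂ)
    (hv : ∀ i, ‖v i‖ = 1) :
    ∏ i, ‖(A *ᵥ v) i‖ ≤ opNorm A ^ n := by
  have hmean : (∑ i, ‖(A *ᵥ v) i‖ ^ 2) / n ≤ opNorm A ^ 2 := by
    refine div_le_of_le_mul₀ (Nat.cast_nonneg n) (sq_nonneg _) ?_
    simpa [hv] using sum_norm_sq_mulVec_le A v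
  have hsq : (∏ i, ‖(A *ᵥ v) i‖) ^ 2 ≤ (opNorm A ^ n) ^ 2 := calc
    (∏ i, ‖(A *ᵥ v) i‖) ^ 2 = ∏ i, ‖(A *ᵥ v) i‖ ^ 2 := (prod_pow _ _ _).symm
    _ ≤ ((∑ i, ‖(A *ᵥ v) i‖ ^ 2) / n) ^ n := by
      simpa using Real.prod_le_sum_div_card_pow univ (fun i ↦ ‖(A *ᵥ v) i‖ ^ 2)
        (fun _ _ ↦ sq_nonneg _)
    _ ≤ (opNorm A ^ 2) ^ n := by gcongr
    _ = (opNorm A ^ n) ^ 2 := by ring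
  exact le_of_pow_le_pow_left₀ two_ne_zero (pow_nonneg (norm_nonneg _) n) hsq

/-- For any `n × n` complex matrix `A` and any `x ∈ {-1,1}^n`, the Glynn estimator
`Gly_x(A) = x_1⋯x_n ∏_i (∑_j a_{ij} x_j)` satisfies `|Gly_x(A)| ≤ ‖A‖^n`. -/
theorem glynn_bound (n : ℕ) (A : Matrix (Fin n) (Fin n) ℂ)
    (x : Fin n → ℂ) (hx : ∀ i, x i = 1 ∨ x i = -1) :
    ‖(∏ i, x i) * ∏ i, ∑ j, A i j * x j‖ ≤ opNorm A ^ n := by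
  have hx1 : ∀ i, ‖x i‖ = 1 := fun i ↦ by rcases hx i with h | h <;> simp [h]
  have hgly : ‖(∏ i, x i) * ∏ i, ∑ j, A i j * x j‖ = ∏ i, ‖(A *ᵥ x) i‖ := by
    simp only [norm_mul, norm_prod, hx1, prod_const_one, one_mul]
    rfl
  exact hgly ▸ prod_norm_mulVec_le_opNorm_pow A x hx1
end

section
/- Let s_1,…,s_k be positive integers with s_1+⋯+s_k = n, and for each j let x_j be uniform on the (s_j+1)-th roots of unity, independently. For a function σ : [n] → [k], the expectation E[(conj(x_1)^{s_1}⋯conj(x_k)^{s_k})(x_{σ(1)}⋯x_{σ(n)})] equals 1 if |{i : σ(i)=j}| = s_j for all j ∈ [k], and equals 0 otherwise. -/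
/-! Since `x ^ (s + 1) = 1` and `|x| = 1`, we have `conj x ^ s = x⁻¹ ^ s = x`, so the summand
is `∏ⱼ xⱼ ^ (cⱼ + 1)` with `cⱼ = |σ⁻¹(j)|`, and the sum factors over `j`. By orthogonality of
roots of unity the `j`-th factor is `sⱼ + 1` if `sⱼ + 1 ∣ cⱼ + 1` and `0` otherwise; divisibility
forces `sⱼ ≤ cⱼ`, and since `∑ cⱼ = n = ∑ sⱼ` it holds for all `j` exactly when `c = s`. -/

/-- `root m t = e^{2πit/m}`, the `t`-th among the `m`-th roots of unity. -/
noncomputable def root (m t : ℕ) : ℂ :=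
  Complex.exp (2 * Real.pi * Complex.I * t / m)

open Finset

lemma root_eq_pow (m t : ℕ) : root m t = root m 1 ^ t := by
  rw [root, root, ← Complex.exp_nat_mul]
  congr 1
  push_cast
  ring

lemma isPrimitiveRoot_root {m : ℕ} (hm : m ≠ 0) : IsPrimitiveRoot (root m 1) m := by
  convert Complex.isPrimitiveRoot_exp m hm using 2
  rw [root, Nat.cast_one, mul_one]

lemma root_pow_self (m t : ℕ) : root m t ^ m = 1 := by
  rcases eq_or_ne m 0 with rfl | hm
  · exact pow_zero _
  · rw [root_eq_pow, pow_right_comm, (isPrimitiveRoot_root hm).pow_eq_one, one_pow]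

lemma Complex.conj_pow_eq_self_of_pow_succ_eq_one {z : ℂ} {s : ℕ} (h : z ^ (s + 1) = 1) :
    starRingEnd ℂ z ^ s = z := by
  rw [← Complex.inv_eq_conj (Complex.norm_eq_one_of_pow_eq_one h s.succ_ne_zero), inv_pow,
    inv_eq_iff_eq_inv]
  exact (inv_eq_of_mul_eq_one_left (by rwa [← pow_succ])).symm

lemma IsPrimitiveRoot.geom_sum_pow_eq_ite {R : Type*} [CommRing R] [IsDomain R] {ζ : R} {m : ℕ}
    (hζ : IsPrimitiveRoot ζ m) (a : ℕ) :
    ∑ t ∈ range m, (ζ ^ a) ^ t = if m ∣ a then (m : R) else 0 := by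
  split_ifs with hdvd
  · simp [(hζ.pow_eq_one_iff_dvd a).2 hdvd]
  · have hne : ζ ^ a ≠ 1 := fun h => hdvd ((hζ.pow_eq_one_iff_dvd a).1 h)
    refine eq_zero_of_ne_zero_of_mul_left_eq_zero (sub_ne_zero_of_ne hne.symm) ?_
    rw [mul_neg_geom_sum, pow_right_comm, hζ.pow_eq_one, one_pow, sub_self]

lemma sum_root_pow {m : ℕ} (hm : m ≠ 0) (a : ℕ) :
    ∑ t : Fin m, root m t ^ a = if m ∣ a then (m : ℂ) else 0 := by
  rw [Fintype.sum_congr _ (fun t : Fin m => (root m 1 ^ a) ^ (t : ℕ))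
      fun t => by rw [root_eq_pow, pow_right_comm],
    Fin.sum_univ_eq_sum_range (fun t => (root m 1 ^ a) ^ t),
    (isPrimitiveRoot_root hm).geom_sum_pow_eq_ite]

lemma Fintype.prod_comp_eq_prod_pow_card_fiber {ι κ M : Type*} [Fintype ι] [Fintype κ]
    [DecidableEq κ] [CommMonoid M] (f : κ → M) (g : ι → κ) :
    ∏ i, f (g i) = ∏ j, f j ^ #{i | g i = j} := by
  rw [← Finset.prod_fiberwise' univ g f]
  simp_rw [prod_const]

lemma forall_succ_dvd_succ_iff_eq {ι : Type*} [Fintype ι] {c s : ι → ℕ}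
    (hsum : ∑ j, c j = ∑ j, s j) : (∀ j, s j + 1 ∣ c j + 1) ↔ ∀ j, c j = s j := by
  refine ⟨fun hdvd => ?_, fun heq j => by rw [heq j]⟩
  have hle : ∀ j ∈ univ, s j ≤ c j := fun j _ =>
    Nat.succ_le_succ_iff.1 (Nat.le_of_dvd (c j).succ_pos (hdvd j))
  exact fun j => ((sum_eq_sum_iff_of_le hle).1 hsum.symm j (mem_univ j)).symm

theorem expectation_roots_product_general (n k : ℕ) (s : Fin k → ℕ)
    (hsum : ∑ j, s j = n) (σ : Fin n → Fin k) :
    (∑ f : (∀ j, Fin (s j + 1)),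
        (∏ j, (starRingEnd ℂ) (root (s j + 1) (f j)) ^ s j) *
          ∏ i, root (s (σ i) + 1) (f (σ i)))
        / (∏ j, ((s j : ℂ) + 1))
      = if ∀ j, (Finset.univ.filter fun i => σ i = j).card = s j then 1 else 0 := by
  set c : Fin k → ℕ := fun j => #{i | σ i = j}
  have hsummand (f : ∀ j, Fin (s j + 1)) :
      (∏ j, (starRingEnd ℂ) (root (s j + 1) (f j)) ^ s j) * ∏ i, root (s (σ i) + 1) (f (σ i)) =
        ∏ j, root (s j + 1) (f j) ^ (c j + 1) := by
    rw [Fintype.prod_comp_eq_prod_pow_card_fiber (fun j => root (s j + 1) (f j)) σ,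
      ← prod_mul_distrib]
    refine prod_congr rfl fun j _ => ?_
    rw [Complex.conj_pow_eq_self_of_pow_succ_eq_one (root_pow_self _ _), pow_succ']
  have hc : ∑ j, c j = ∑ j, s j := by
    rw [hsum, ← card_eq_sum_card_fiberwise (fun i _ => mem_univ (σ i)), card_univ,
      Fintype.card_fin]
  rw [Fintype.sum_congr _ _ hsummand,
    ← Fintype.prod_sum fun j (t : Fin (s j + 1)) => root (s j + 1) t ^ (c j + 1)]
  simp only [sum_root_pow (Nat.succ_ne_zero _), Fintype.prod_ite_zero,
    forall_succ_dvd_succ_iff_eq hc]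
  split_ifs
  · push_cast
    exact div_self (prod_ne_zero_iff.2 fun j _ => Nat.cast_add_one_ne_zero (s j))
  · exact zero_div _

/-- Let `s_1,…,s_k > 0` sum to `n`, and for each `j` let `x_j` be uniform on the
`(s_j+1)`-th roots of unity, independently (parametrized by exponents `f j`).
For `σ : [n] → [k]`, the expectation `E[(conj(x_1)^{s_1}⋯conj(x_k)^{s_k})(x_{σ(1)}⋯x_{σ(n)})]`
is `1` if `|{i : σ(i) = j}| = s_j` for all `j`, and `0` otherwise. -/
theorem expectation_roots_product (n k : ℕ) (s : Fin k → ℕ)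
    (hpos : ∀ j, 0 < s j) (hsum : ∑ j, s j = n) (σ : Fin n → Fin k) :
    (∑ f : (∀ j, Fin (s j + 1)),
        (∏ j, (starRingEnd ℂ) (root (s j + 1) (f j)) ^ s j) *
          ∏ i, root (s (σ i) + 1) (f (σ i)))
        / (∏ j, ((s j : ℂ) + 1))
      = if ∀ j, (Finset.univ.filter fun i => σ i = j).card = s j then 1 else 0 :=
  expectation_roots_product_general n k s hsum σ
end

section
/- Let B be an n×k complex matrix, s_1,…,s_k positive integers summing to n, and A the n×n matrix with s_j copies of the j-th column of B. Then |Per(A)| ≤ (s_1!⋯s_k!)/√(s_1^{s_1}⋯s_k^{s_k}) · ‖B‖^n. -/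
open Finset Equiv Matrix
open scoped Nat Real

theorem IsPrimitiveRoot.sum_pow_mul_inv_pow {K : Type*} [Field K] {ω : K} {N : ℕ}
    (hω : IsPrimitiveRoot ω N) {d e : ℕ} (hd : d < N) (he : e < N) :
    ∑ u : Fin N, (ω ^ (u : ℕ)) ^ d * ((ω ^ (u : ℕ)) ^ e)⁻¹ = if d = e then (N : K) else 0 := by
  have hω0 : ω ≠ 0 := hω.ne_zero (by omega)
  simp_rw [← pow_mul, pow_mul', ← div_eq_mul_inv, ← div_pow]
  rw [Fin.sum_univ_eq_sum_range (fun u => (ω ^ d / ω ^ e) ^ u)]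
  split_ifs with hde
  · simp [hde, hω0]
  · have hne : ω ^ d / ω ^ e ≠ 1 := fun h =>
      hde (hω.pow_inj hd he (div_eq_one_iff_eq (pow_ne_zero e hω0) |>.1 h))
    rw [geom_sum_eq hne, div_pow, ← pow_mul, ← pow_mul, mul_comm d, mul_comm e, pow_mul, pow_mul,
      hω.pow_eq_one, one_pow, one_pow, div_one, sub_self, zero_div]

theorem IsPrimitiveRoot.sum_pi_prod_pow_mul_inv_pow {κ K : Type*} [Fintype κ] [DecidableEq κ]
    [Field K] {ω : K} {N : ℕ} (hω : IsPrimitiveRoot ω N) {d e : κ → ℕ} (hd : ∀ j, d j < N)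
    (he : ∀ j, e j < N) :
    ∑ t : κ → Fin N, ∏ j, (ω ^ (t j : ℕ)) ^ d j * ((ω ^ (t j : ℕ)) ^ e j)⁻¹
      = if d = e then (N : K) ^ Fintype.card κ else 0 := by
  rw [← Fintype.prod_sum (fun j (u : Fin N) => (ω ^ (u : ℕ)) ^ d j * ((ω ^ (u : ℕ)) ^ e j)⁻¹)]
  simp_rw [hω.sum_pow_mul_inv_pow (hd _) (he _), Fintype.prod_ite_zero, funext_iff, prod_const,
    card_univ]

section FiberCard

variable {ι κ : Type*} [Fintype ι] [DecidableEq κ]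

/-- `fiberCard f` is the exponent vector of the monomial `∏ i, x (f i)`. -/
def fiberCard (f : ι → κ) (j : κ) : ℕ := #{i | f i = j}

theorem fiberCard_le (f : ι → κ) (j : κ) : fiberCard f j ≤ Fintype.card ι :=
  card_filter_le _ _

theorem fiberCard_comp_perm (f : ι → κ) (σ : Perm ι) : fiberCard (f ∘ σ) = fiberCard f :=
  funext fun j => card_equiv σ fun i => by simp

theorem exists_perm_comp_eq [DecidableEq ι] {c f : ι → κ} (h : fiberCard f = fiberCard c) :
    ∃ τ : Perm ι, c ∘ τ = f := by
  have e : ∀ j, {i // f i = j} ≃ {i // c i = j} := fun j =>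
    Fintype.equivOfCardEq (by simpa only [fiberCard, Fintype.card_subtype] using congrFun h j)
  exact ⟨Equiv.ofFiberEquiv e, funext (Equiv.ofFiberEquiv_map e)⟩

theorem card_perm_comp_eq [DecidableEq ι] [Fintype κ] {c f : ι → κ}
    (h : fiberCard f = fiberCard c) :
    #{σ : Perm ι | c ∘ σ = f} = ∏ j, (fiberCard c j)! := by
  obtain ⟨τ, rfl⟩ := exists_perm_comp_eq h
  have hstab : ∀ σ : Perm ι, c ∘ σ = c ∘ τ ↔ c ∘ ⇑(Equiv.mulRight τ⁻¹ σ) = c := fun σ => by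
    rw [coe_mulRight, Perm.coe_mul, ← Function.comp_assoc, Perm.coe_inv, Equiv.comp_symm_eq]
  let e := (Equiv.mulRight τ⁻¹).subtypeEquiv (q := fun g : Perm ι => c ∘ ⇑g = c) hstab
  rw [← Fintype.card_subtype, Fintype.card_congr e, DomMulAct.stabilizer_card]
  simp only [fiberCard, Fintype.card_subtype]

theorem image_comp_perm [DecidableEq ι] [Fintype κ] (c : ι → κ) :
    univ.image (fun σ : Perm ι => c ∘ σ) = ({f | fiberCard f = fiberCard c} : Finset (ι → κ)) := by
  ext f
  simp only [mem_image, mem_univ, true_and, mem_filter]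
  constructor
  · rintro ⟨σ, rfl⟩
    exact fiberCard_comp_perm c σ
  · exact exists_perm_comp_eq

theorem sum_perm_prod_comp [DecidableEq ι] [Fintype κ] {R : Type*} [CommSemiring R]
    (B : ι → κ → R) (c : ι → κ) :
    ∑ σ : Perm ι, ∏ i, B i (c (σ i))
      = (∏ j, (fiberCard c j)! : ℕ) * ∑ f with fiberCard f = fiberCard c, ∏ i, B i (f i) := by
  refine (Finset.sum_comp (fun f : ι → κ => ∏ i, B i (f i)) (fun σ : Perm ι => c ∘ σ)).trans ?_
  rw [image_comp_perm, mul_sum]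
  refine sum_congr rfl fun f hf => ?_
  rw [card_perm_comp_eq (mem_filter.1 hf).2, nsmul_eq_mul]

theorem prod_mulVec_eq_sum [DecidableEq ι] [Fintype κ] {R : Type*} [CommSemiring R]
    (B : Matrix ι κ R) (x : κ → R) :
    ∏ i, (B *ᵥ x) i = ∑ f : ι → κ, (∏ i, B i (f i)) * ∏ j, x j ^ fiberCard f j := by
  simp only [Matrix.mulVec, dotProduct, Fintype.prod_sum, prod_mul_distrib]
  refine sum_congr rfl fun f _ => ?_
  rw [← Finset.prod_fiberwise' univ f x]
  simp only [prod_const, fiberCard]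

/-- Discrete Fourier extraction of the coefficient of `∏ j, x j ^ s j` from `∏ i, (B *ᵥ x) i`,
sampled on the torus `x j = r j * ω ^ t j`. -/
theorem IsPrimitiveRoot.sum_prod_mulVec_mul_inv_pow [DecidableEq ι] [Fintype κ] {K : Type*}
    [Field K] {ω : K} {N : ℕ} (hω : IsPrimitiveRoot ω N) (hN : Fintype.card ι < N) {s : κ → ℕ}
    (hs : ∀ j, s j < N) (B : Matrix ι κ K) (r : κ → K) :
    ∑ t : κ → Fin N, (∏ i, (B *ᵥ fun j => r j * ω ^ (t j : ℕ)) i) * ∏ j, ((ω ^ (t j : ℕ)) ^ s j)⁻¹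
      = (N : K) ^ Fintype.card κ * (∏ j, r j ^ s j) * ∑ f with fiberCard f = s, ∏ i, B i (f i) := by
  have hd (f : ι → κ) (j : κ) : fiberCard f j < N := (fiberCard_le f j).trans_lt hN
  calc _ = ∑ t : κ → Fin N, ∑ f : ι → κ, ((∏ i, B i (f i)) * ∏ j, r j ^ fiberCard f j) *
          ∏ j, (ω ^ (t j : ℕ)) ^ fiberCard f j * ((ω ^ (t j : ℕ)) ^ s j)⁻¹ := by
        simp_rw [prod_mulVec_eq_sum, sum_mul, mul_pow, prod_mul_distrib, mul_assoc]
    _ = ∑ f : ι → κ, ((∏ i, B i (f i)) * ∏ j, r j ^ fiberCard f j) *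
          if fiberCard f = s then (N : K) ^ Fintype.card κ else 0 := by
        rw [sum_comm]
        simp_rw [← mul_sum, hω.sum_pi_prod_pow_mul_inv_pow (hd _) hs]
    _ = _ := by
        rw [sum_filter, mul_sum]
        refine sum_congr rfl fun f _ => ?_
        split_ifs with hf
        · rw [hf]; ring
        · rw [mul_zero, mul_zero]

end FiberCard

theorem Real.prod_le_pow_sum_div_card {ι : Type*} (s : Finset ι) {z : ι → ℝ}
    (hz : ∀ i ∈ s, 0 ≤ z i) : ∏ i ∈ s, z i ≤ ((∑ i ∈ s, z i) / #s) ^ #s := by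
  rcases s.eq_empty_or_nonempty with rfl | hs
  · simp
  have hcard : (0 : ℝ) < #s := by exact_mod_cast hs.card_pos
  have hamgm := Real.geom_mean_le_arith_mean s (fun _ => 1) z (fun _ _ => zero_le_one)
    (by simpa using hcard) hz
  simp only [Real.rpow_one, sum_const, nsmul_eq_mul, mul_one, one_mul] at hamgm
  calc ∏ i ∈ s, z i = ((∏ i ∈ s, z i) ^ ((#s : ℝ)⁻¹)) ^ #s := by
        rw [← Real.rpow_natCast, ← Real.rpow_mul (prod_nonneg hz), inv_mul_cancel₀ hcard.ne',
          Real.rpow_one]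
    _ ≤ _ := pow_le_pow_left₀ (Real.rpow_nonneg (prod_nonneg hz) _) hamgm _

theorem Real.sqrt_pow {x : ℝ} (hx : 0 ≤ x) (m : ℕ) : √(x ^ m) = √x ^ m := by
  conv_lhs => rw [← Real.sq_sqrt hx, ← pow_mul, mul_comm, pow_mul]
  exact Real.sqrt_sq (by positivity)

theorem sum_norm_mulVec_sq_le {m k : ℕ} (B : Matrix (Fin m) (Fin k) ℂ) (v : Fin k → ℂ) :
    ∑ i, ‖(B *ᵥ v) i‖ ^ 2 ≤ opNorm B ^ 2 * ∑ j, ‖v j‖ ^ 2 := by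
  have h := (LinearMap.toContinuousLinearMap (Matrix.toEuclideanLin B)).le_opNorm
    (WithLp.toLp 2 v)
  rw [← opNorm] at h
  simpa [mul_pow, EuclideanSpace.norm_sq_eq] using pow_le_pow_left₀ (norm_nonneg _) h 2

/-- AM-GM on the squared moduli of the entries of `B *ᵥ v`. -/
theorem norm_prod_mulVec_le {n k : ℕ} (B : Matrix (Fin n) (Fin k) ℂ) {v : Fin k → ℂ}
    (hv : ∑ j, ‖v j‖ ^ 2 ≤ n) : ‖∏ i, (B *ᵥ v) i‖ ≤ opNorm B ^ n := by
  have hmean : (∑ i, ‖(B *ᵥ v) i‖ ^ 2) / n ≤ opNorm B ^ 2 :=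
    div_le_of_le_mul₀ n.cast_nonneg (sq_nonneg _) <|
      (sum_norm_mulVec_sq_le B v).trans (mul_le_mul_of_nonneg_left hv (sq_nonneg _))
  have hsq : ‖∏ i, (B *ᵥ v) i‖ ^ 2 ≤ (opNorm B ^ n) ^ 2 := by
    calc ‖∏ i, (B *ᵥ v) i‖ ^ 2 = ∏ i, ‖(B *ᵥ v) i‖ ^ 2 := by rw [norm_prod, prod_pow]
      _ ≤ ((∑ i, ‖(B *ᵥ v) i‖ ^ 2) / n) ^ n := by
        simpa using Real.prod_le_pow_sum_div_card univ fun i _ => sq_nonneg ‖(B *ᵥ v) i‖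
      _ ≤ (opNorm B ^ 2) ^ n := pow_le_pow_left₀ (by positivity) hmean n
      _ = (opNorm B ^ n) ^ 2 := by ring
  exact (pow_le_pow_iff_left₀ (norm_nonneg _) (pow_nonneg (norm_nonneg _) _) two_ne_zero).1 hsq

theorem sqrt_prod_pow_mul_norm_sum_fiberCard_le {n k : ℕ} (B : Matrix (Fin n) (Fin k) ℂ)
    (s : Fin k → ℕ) (hs : ∑ j, s j = n) :
    √(∏ j, (s j : ℝ) ^ s j) * ‖∑ f with fiberCard f = s, ∏ i, B i (f i)‖ ≤ opNorm B ^ n := by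
  set N := n + 1
  set ω : ℂ := Complex.exp (2 * π * Complex.I / N)
  have hω : IsPrimitiveRoot ω N := Complex.isPrimitiveRoot_exp N n.succ_ne_zero
  have hω1 : ‖ω‖ = 1 := hω.norm'_eq_one n.succ_ne_zero
  have hsN (j : Fin k) : s j < N := Nat.lt_succ_of_le (hs ▸ single_le_sum (by simp) (mem_univ j))
  set r : Fin k → ℂ := fun j => (√(s j : ℝ) : ℂ)
  have hr (j : Fin k) : ‖r j‖ = √(s j : ℝ) := by simp [r]
  have hsample (t : Fin k → Fin N) :
      ‖(∏ i, (B *ᵥ fun j => r j * ω ^ (t j : ℕ)) i) * ∏ j, ((ω ^ (t j : ℕ)) ^ s j)⁻¹‖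
        ≤ opNorm B ^ n := by
    have hunit : ‖∏ j, ((ω ^ (t j : ℕ)) ^ s j)⁻¹‖ = 1 := by simp [hω1]
    rw [norm_mul, hunit, mul_one]
    refine norm_prod_mulVec_le B (le_of_eq ?_)
    simp only [norm_mul, norm_pow, hω1, one_pow, mul_one, hr, Real.sq_sqrt (Nat.cast_nonneg _)]
    exact_mod_cast hs
  have hcoeff : ‖∏ j, r j ^ s j‖ = √(∏ j, (s j : ℝ) ^ s j) := by
    rw [norm_prod, Real.sqrt_prod _ fun j _ => by positivity]
    simp only [norm_pow, hr, Real.sqrt_pow (Nat.cast_nonneg _)]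
  have hsamples := norm_sum_le_of_le univ fun t _ => hsample t
  rw [hω.sum_prod_mulVec_mul_inv_pow (by simp [N]) hsN B r] at hsamples
  simp only [norm_mul, norm_pow, hcoeff, Complex.norm_natCast, sum_const, card_univ,
    Fintype.card_fun, Fintype.card_fin, nsmul_eq_mul, Nat.cast_pow, mul_assoc] at hsamples
  exact le_of_mul_le_mul_left hsamples (by positivity)

theorem permanent_multicolumn_bound_general (n k : ℕ) (s : Fin k → ℕ)
    (hsum : ∑ j, s j = n)
    (B : Matrix (Fin n) (Fin k) ℂ) (c : Fin n → Fin k)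
    (hc : ∀ j, (Finset.univ.filter fun i => c i = j).card = s j)
    (A : Matrix (Fin n) (Fin n) ℂ) (hA : ∀ i m, A i m = B i (c m)) :
    ‖∑ σ : Equiv.Perm (Fin n), ∏ i, A i (σ i)‖
      ≤ ((∏ j, (s j).factorial : ℕ) : ℝ) / Real.sqrt (∏ j, (s j : ℝ) ^ s j)
          * opNorm B ^ n := by
  have hcs : fiberCard c = s := funext hc
  have hper : ∑ σ : Perm (Fin n), ∏ i, A i (σ i)
      = (∏ j, (s j)! : ℕ) * ∑ f with fiberCard f = s, ∏ i, B i (f i) := by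
    simp only [hA]
    rw [sum_perm_prod_comp B c, hcs]
  have hsqrt_pos : 0 < √(∏ j, (s j : ℝ) ^ s j) :=
    Real.sqrt_pos.2 (prod_pos fun j _ => by exact_mod_cast Nat.pow_self_pos)
  rw [hper, norm_mul, Complex.norm_natCast, div_mul_eq_mul_div, le_div_iff₀ hsqrt_pos, mul_assoc]
  gcongr
  rw [mul_comm]
  exact sqrt_prod_pow_mul_norm_sum_fiberCard_le B s hsum

/-- **Generalized permanent upper bound.**  Let `B` be `n × k` complex, `s_1,…,s_k > 0`
summing to `n`, and let `A` be the `n × n` matrix with `s_j` copies of the `j`-th column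
of `B`.  Then `|Per(A)| ≤ (s_1!⋯s_k!)/√(s_1^{s_1}⋯s_k^{s_k}) · ‖B‖^n`. -/
theorem permanent_multicolumn_bound (n k : ℕ) (s : Fin k → ℕ)
    (hpos : ∀ j, 0 < s j) (hsum : ∑ j, s j = n)
    (B : Matrix (Fin n) (Fin k) ℂ) (c : Fin n → Fin k)
    (hc : ∀ j, (Finset.univ.filter fun i => c i = j).card = s j)
    (A : Matrix (Fin n) (Fin n) ℂ) (hA : ∀ i m, A i m = B i (c m)) :
    ‖∑ σ : Equiv.Perm (Fin n), ∏ i, A i (σ i)‖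
      ≤ ((∏ j, (s j).factorial : ℕ) : ℝ) / Real.sqrt (∏ j, (s j : ℝ) ^ s j)
          * opNorm B ^ n :=
  permanent_multicolumn_bound_general n k s hsum B c hc A hA
end

section
/- For any n×n matrix A with ‖A‖ ≤ 1 whose rows are all equal (i.e., A consists of n copies of a single row repeated, arising from s_1 = n), the probability quantity |Per(A)|²/n! is at most n!/n^n. -/
open Finset Nat

theorem Equiv.Perm.sum_prod_comp {ι R : Type*} [Fintype ι] [DecidableEq ι] [CommSemiring R]
    (f : ι → R) : ∑ σ : Equiv.Perm ι, ∏ i, f (σ i) = (Fintype.card ι)! * ∏ i, f i := by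
  simp [Equiv.prod_comp, Fintype.card_perm]

theorem norm_col_le_opNorm {m k : ℕ} (A : Matrix (Fin m) (Fin k) ℂ) (j : Fin k) :
    ‖WithLp.toLp 2 (fun i => A i j)‖ ≤ opNorm A := by
  have hcol : Matrix.toEuclideanLin A (EuclideanSpace.single j 1) =
      WithLp.toLp 2 (fun i => A i j) := by
    ext i
    simp [Matrix.mulVec_single]
  simpa [hcol, opNorm] using (LinearMap.toContinuousLinearMap (Matrix.toEuclideanLin A)).le_opNorm
    (EuclideanSpace.single j 1)

theorem EuclideanSpace.sq_norm_const {𝕜 ι : Type*} [RCLike 𝕜] [Fintype ι] (c : 𝕜) :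
    ‖WithLp.toLp 2 (fun _ : ι => c)‖ ^ 2 = Fintype.card ι * ‖c‖ ^ 2 := by
  simp [EuclideanSpace.norm_sq_eq]

/-- **No `n`-photon Hong–Ou–Mandel dip for a single mode.**  For any `n × n` matrix `A`
with `‖A‖ ≤ 1` whose rows are all equal (the case `k = 1`, `s_1 = n`), the probability
quantity `|Per(A)|²/n!` is at most `n!/nⁿ`. -/
theorem single_mode_probability_bound (n : ℕ) (A : Matrix (Fin n) (Fin n) ℂ)
    (hA : opNorm A ≤ 1) (hrows : ∀ i i' j, A i j = A i' j) :
    ‖∑ σ : Equiv.Perm (Fin n), ∏ i, A i (σ i)‖ ^ 2 / (n.factorial : ℝ)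
      ≤ (n.factorial : ℝ) / (n : ℝ) ^ n := by
  rcases n.eq_zero_or_pos with rfl | hn
  · simp
  set r := A ⟨0, hn⟩
  have hper : ∑ σ : Equiv.Perm (Fin n), ∏ i, A i (σ i) = n ! * ∏ j, r j := by
    simp_rw [hrows _ ⟨0, hn⟩]
    simpa using Equiv.Perm.sum_prod_comp r
  have hr : ∀ j, ‖r j‖ ^ 2 ≤ (n : ℝ)⁻¹ := fun j => by
    have hcol := norm_col_le_opNorm A j
    simp_rw [hrows _ ⟨0, hn⟩] at hcol
    have hsq : (n : ℝ) * ‖r j‖ ^ 2 ≤ 1 := by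
      simpa [EuclideanSpace.sq_norm_const] using
        pow_le_one₀ (n := 2) (norm_nonneg _) (hcol.trans hA)
    rw [← one_div, le_div_iff₀ (by positivity)]
    linarith
  calc ‖∑ σ : Equiv.Perm (Fin n), ∏ i, A i (σ i)‖ ^ 2 / n !
      = n ! * ∏ j, ‖r j‖ ^ 2 := by
        rw [hper, norm_mul, norm_prod, mul_pow, prod_pow, Complex.norm_natCast]
        field_simp
    _ ≤ n ! * ∏ _j : Fin n, (n : ℝ)⁻¹ := by gcongr with j; exact hr j
    _ = n ! / (n : ℝ) ^ n := by simp [div_eq_mul_inv]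
end

section
/- For positive integers s_1,…,s_k, the bound is tight: there exists an n×n unitary matrix U (n = s_1+⋯+s_k), block diagonal with blocks of sizes s_1,…,s_k whose top rows are (1/√s_j,…,1/√s_j), such that the n×n matrix A obtained by taking, for each block j, s_j copies of the first row of that block satisfies |Per(A)|²/(s_1!⋯s_k!) = (s_1!⋯s_k!)/(s_1^{s_1}⋯s_k^{s_k}). -/
/-!
Take `U` block diagonal, each block a unitary whose top row is constant `1/√s_j`. Then the row
of `A` indexed by an element of block `j` equals `1/√s_j` on block `j` and vanishes elsewhere,
so a permutation contributes to `Per(A)` only if it preserves every block. There are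
`s_1!⋯s_k!` of those, each contributing `∏ j, s_j^(-s_j/2)`.
-/

/-- The permanent of a square matrix over an arbitrary finite index type. -/
noncomputable def perm {I : Type*} [Fintype I] [DecidableEq I]
    (A : Matrix I I ℂ) : ℂ :=
  ∑ σ : Equiv.Perm I, ∏ i, A i (σ i)

open Matrix

theorem Matrix.exists_mem_unitaryGroup_row_eq {𝕜 ι : Type*} [RCLike 𝕜] [Fintype ι]
    [DecidableEq ι] (v : EuclideanSpace 𝕜 ι) (hv : ‖v‖ = 1) (i₀ : ι) :
    ∃ U ∈ unitaryGroup ι 𝕜, ∀ j, U i₀ j = v j := by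
  have hv' : Orthonormal 𝕜 (({i₀} : Set ι).domRestrict fun _ => v) := by
    rw [orthonormal_iff_ite]
    rintro ⟨i, rfl⟩ ⟨j, rfl⟩
    simp [inner_self_eq_norm_sq_to_K, hv]
  -- the rows of the transposed change-of-basis matrix are the vectors of `b`
  obtain ⟨b, hb⟩ := hv'.exists_orthonormalBasis_extension_of_card_eq (by simp)
  refine ⟨((EuclideanSpace.basisFun ι 𝕜).toBasis.toMatrix b)ᵀ,
    transpose_mem_unitaryGroup_iff.mpr
      (OrthonormalBasis.toMatrix_orthonormalBasis_mem_unitary _ _),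
    fun j => ?_⟩
  simp [Module.Basis.toMatrix_apply, hb i₀ rfl]

theorem EuclideanSpace.norm_const_inv_sqrt_card {ι : Type*} [Fintype ι] [Nonempty ι] :
    ‖WithLp.toLp 2 fun _ : ι => 1 / (Real.sqrt (Fintype.card ι) : ℂ)‖ = 1 := by
  have hcard : (0 : ℝ) < Fintype.card ι := by exact_mod_cast Fintype.card_pos
  simp [EuclideanSpace.norm_eq, hcard.le, hcard.ne']

theorem Matrix.exists_mem_unitaryGroup_row_eq_inv_sqrt {n : ℕ} (i₀ : Fin n) :
    ∃ U ∈ unitaryGroup (Fin n) ℂ, ∀ j, U i₀ j = 1 / (Real.sqrt n : ℂ) := by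
  have : Nonempty (Fin n) := ⟨i₀⟩
  simpa using
    exists_mem_unitaryGroup_row_eq _ (EuclideanSpace.norm_const_inv_sqrt_card (ι := Fin n)) i₀

theorem Matrix.blockDiagonal'_mem_unitaryGroup {ι α : Type*} {m : ι → Type*} [Fintype ι]
    [DecidableEq ι] [∀ i, Fintype (m i)] [∀ i, DecidableEq (m i)] [CommRing α] [StarRing α]
    {M : ∀ i, Matrix (m i) (m i) α} (hM : ∀ i, M i ∈ unitaryGroup (m i) α) :
    blockDiagonal' M ∈ unitaryGroup (Σ i, m i) α := by
  rw [mem_unitaryGroup_iff, star_eq_conjTranspose, blockDiagonal'_conjTranspose,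
    ← blockDiagonal'_mul]
  convert blockDiagonal'_one
  exact mem_unitaryGroup_iff.mp (hM _)

theorem perm_of_ite_eq_card_mul_prod {I J : Type*} [Fintype I] [DecidableEq I] [DecidableEq J]
    (f : I → J) (r : I → ℂ) :
    perm (of fun i j => if f j = f i then r i else 0)
      = Fintype.card {σ : Equiv.Perm I // f ∘ σ = f} * ∏ i, r i := by
  simp only [perm, of_apply, Fintype.prod_ite_zero]
  rw [Finset.sum_ite, Finset.sum_const_zero, add_zero, Finset.sum_const, nsmul_eq_mul,
    Fintype.card_subtype]
  simp only [funext_iff, Function.comp_apply]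

theorem card_perm_sigma_fst_comp_eq {ι : Type*} {β : ι → Type*} [Fintype ι] [DecidableEq ι]
    [∀ i, Fintype (β i)] [∀ i, DecidableEq (β i)] :
    Fintype.card {σ : Equiv.Perm (Σ i, β i) // Sigma.fst ∘ σ = Sigma.fst}
      = ∏ i, (Fintype.card (β i)).factorial := by
  rw [DomMulAct.stabilizer_card]
  simp only [Fintype.card_congr (Equiv.sigmaSubtype _)]

theorem norm_prod_sigma_inv_sqrt_sq {k : ℕ} (s : Fin k → ℕ) :
    ‖∏ a : (j : Fin k) × Fin (s j), 1 / (Real.sqrt (s a.1) : ℂ)‖ ^ 2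
      = (∏ j, (s j : ℝ) ^ s j)⁻¹ := by
  rw [norm_prod, ← Finset.prod_pow, Fintype.prod_sigma]
  simp [Finset.prod_inv_distrib]

/-- **Tightness of the bunching bound.**  For positive integers `s_1,…,s_k` (with
`n = s_1 + ⋯ + s_k` encoded by the index type `Σ j, Fin (s j)`), there exists an
`n × n` unitary matrix `U`, block diagonal with blocks of sizes `s_1,…,s_k`, whose
top row in block `j` is `(1/√s_j,…,1/√s_j)`, such that the `n × n` matrix `A`
obtained by taking `s_j` copies of the first row of block `j` (extended by zeros)
satisfies `|Per(A)|²/(s_1!⋯s_k!) = (s_1!⋯s_k!)/(s_1^{s_1}⋯s_k^{s_k})`. -/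
theorem bunching_bound_tight (k : ℕ) (s : Fin k → ℕ) (hpos : ∀ j, 0 < s j) :
    ∃ U : Matrix ((j : Fin k) × Fin (s j)) ((j : Fin k) × Fin (s j)) ℂ,
      U ∈ Matrix.unitaryGroup ((j : Fin k) × Fin (s j)) ℂ ∧
      (∀ a b : (j : Fin k) × Fin (s j), a.1 ≠ b.1 → U a b = 0) ∧
      (∀ (j : Fin k) (b : Fin (s j)),
        U ⟨j, ⟨0, hpos j⟩⟩ ⟨j, b⟩ = 1 / (Real.sqrt (s j) : ℂ)) ∧
      ‖perm (Matrix.of fun a b => U ⟨a.1, ⟨0, hpos a.1⟩⟩ b)‖ ^ 2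
          / ((∏ j, (s j).factorial : ℕ) : ℝ)
        = ((∏ j, (s j).factorial : ℕ) : ℝ) / (∏ j, (s j : ℝ) ^ s j) := by
  choose M hM hMrow using fun j => exists_mem_unitaryGroup_row_eq_inv_sqrt ⟨0, hpos j⟩
  refine ⟨blockDiagonal' M, blockDiagonal'_mem_unitaryGroup hM,
    fun a b h => blockDiagonal'_apply_ne M a.2 b.2 h,
    fun j b => by rw [blockDiagonal'_apply_eq, hMrow], ?_⟩
  have hA :
      (of fun a b : (j : Fin k) × Fin (s j) => blockDiagonal' M ⟨a.1, ⟨0, hpos a.1⟩⟩ b)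
        = of fun a b => if b.1 = a.1 then 1 / (Real.sqrt (s a.1) : ℂ) else 0 := by
    ext ⟨i, a⟩ ⟨j, b⟩
    by_cases h : j = i
    · subst h; simp [hMrow]
    · simp [blockDiagonal'_apply_ne M _ _ (Ne.symm h), h]
  have hN : ((∏ j, (s j).factorial : ℕ) : ℝ) ≠ 0 := by positivity
  rw [hA, perm_of_ite_eq_card_mul_prod, card_perm_sigma_fst_comp_eq, norm_mul, mul_pow,
    norm_prod_sigma_inv_sqrt_sq]
  simp only [Fintype.card_fin, Complex.norm_natCast]
  field_simp
end

section
/- Let B be an n×k matrix with nonnegative real entries and s_1,…,s_k positive integers summing to n. Then ∑_{σ:[n]→[k]} (∏_{i=1}^n b_{i,σ(i)}) · √(s_{σ(1)}⋯s_{σ(n)}) = ∏_{i=1}^n (√(s_1) b_{i,1} + ⋯ + √(s_k) b_{i,k}), and this quantity is at most √(s_1^{s_1}⋯s_k^{s_k}) · ‖B‖^n. -/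
/-!
Expanding the product `∏ᵢ ∑ⱼ √sⱼ bᵢⱼ` over all choices `σ : [n] → [k]` of one summand per
factor gives the sum over functions. For the bound, the factors are the entries of `B u` with
`u = (√s₁, …, √sₖ)`, and `‖u‖² = s₁ + ⋯ + sₖ = n`. By AM-GM, a product of `n` reals whose squares
sum to at most `n c²` is at most `cⁿ`; with `c = ‖B‖` this gives `∏ᵢ (B u)ᵢ ≤ ‖B‖ⁿ`, and
`√(s₁^{s₁}⋯sₖ^{sₖ}) ≥ 1`.
-/

/-- The operator (spectral) 2-norm of a real matrix. -/
noncomputable def opNormR {m k : ℕ} (A : Matrix (Fin m) (Fin k) ℝ) : ℝ :=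
  ‖LinearMap.toContinuousLinearMap (Matrix.toEuclideanLin A)‖

open Finset Matrix

theorem opNormR_nonneg {m k : ℕ} (A : Matrix (Fin m) (Fin k) ℝ) : 0 ≤ opNormR A :=
  norm_nonneg _

theorem sum_prod_mul_sqrt_prod_eq_prod_sum {ι κ : Type*} [Fintype ι] [DecidableEq ι]
    [Fintype κ] (B : ι → κ → ℝ) (s : κ → ℝ) (hs : ∀ j, 0 ≤ s j) :
    ∑ σ : ι → κ, (∏ i, B i (σ i)) * √(∏ i, s (σ i)) = ∏ i, ∑ j, √(s j) * B i j := by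
  rw [Fintype.prod_sum]
  refine sum_congr rfl fun σ _ => ?_
  rw [prod_mul_distrib, mul_comm, Real.sqrt_prod _ fun i _ => hs (σ i)]

theorem prod_le_pow_card_of_sum_sq_le {ι : Type*} [Fintype ι] (x : ι → ℝ) {c : ℝ} (hc : 0 ≤ c)
    (h : ∑ i, x i ^ 2 ≤ Fintype.card ι * c ^ 2) : ∏ i, x i ≤ c ^ Fintype.card ι := by
  set n := Fintype.card ι
  rcases Nat.eq_zero_or_pos n with hn | hn
  · simp [n, Fintype.card_eq_zero_iff.mp hn]
  have hnR : (0 : ℝ) < n := by exact_mod_cast hn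
  have amgm : (∏ i, x i ^ 2) ^ (n⁻¹ : ℝ) ≤ c ^ 2 := by
    have := Real.geom_mean_le_arith_mean univ (fun _ => 1) (fun i => x i ^ 2)
      (fun _ _ => zero_le_one) (by simpa using hn) (fun i _ => sq_nonneg (x i))
    simp only [Real.rpow_one, sum_const, card_univ, nsmul_eq_mul, mul_one, one_mul] at this
    exact this.trans ((div_le_iff₀ hnR).mpr (by linarith))
  have hsq : (∏ i, x i) ^ 2 ≤ (c ^ n) ^ 2 := by
    calc (∏ i, x i) ^ 2 = ((∏ i, x i ^ 2) ^ (n⁻¹ : ℝ)) ^ n := by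
          rw [Real.rpow_inv_natCast_pow (prod_nonneg fun i _ => sq_nonneg (x i)) hn.ne',
            prod_pow]
      _ ≤ (c ^ 2) ^ n := pow_le_pow_left₀ (by positivity) amgm n
      _ = (c ^ n) ^ 2 := by ring
  exact le_of_sq_le_sq hsq (by positivity)

theorem sum_sq_mulVec_le {m k : ℕ} (A : Matrix (Fin m) (Fin k) ℝ) (v : Fin k → ℝ) :
    ∑ i, (A *ᵥ v) i ^ 2 ≤ opNormR A ^ 2 * ∑ j, v j ^ 2 := by
  have hle := (LinearMap.toContinuousLinearMap (toEuclideanLin A)).le_opNorm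
    (WithLp.toLp 2 v)
  have := pow_le_pow_left₀ (norm_nonneg _) hle 2
  rw [mul_pow] at this
  simpa [opNormR, EuclideanSpace.real_norm_sq_eq] using this

theorem one_le_natCast_pow_self (m : ℕ) : (1 : ℝ) ≤ (m : ℝ) ^ m := by
  rcases m with _ | m
  · simp
  · exact one_le_pow₀ (by simp)

theorem sum_over_functions_eq_genGlynn_general (n k : ℕ) (s : Fin k → ℕ)
    (hsum : ∑ j, s j = n)
    (B : Matrix (Fin n) (Fin k) ℝ) :
    (∑ σ : Fin n → Fin k, (∏ i, B i (σ i)) * Real.sqrt (∏ i, (s (σ i) : ℝ)))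
        = (∏ i, ∑ j, Real.sqrt (s j) * B i j) ∧
      (∏ i, ∑ j, Real.sqrt (s j) * B i j)
        ≤ Real.sqrt (∏ j, (s j : ℝ) ^ s j) * opNormR B ^ n := by
  refine ⟨sum_prod_mul_sqrt_prod_eq_prod_sum B _ fun j => Nat.cast_nonneg (s j), ?_⟩
  let u : Fin k → ℝ := fun j => √(s j)
  have hu : ∑ j, u j ^ 2 = n := by simp [u, ← hsum]
  have hrows : (fun i => ∑ j, √(s j) * B i j) = B *ᵥ u := by
    ext i
    simp only [mulVec, dotProduct, u, mul_comm]
  have hBu : ∏ i, (B *ᵥ u) i ≤ opNormR B ^ n := by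
    have hsq : ∑ i, (B *ᵥ u) i ^ 2 ≤ Fintype.card (Fin n) * opNormR B ^ 2 := by
      rw [Fintype.card_fin, ← hu, mul_comm]
      exact sum_sq_mulVec_le B u
    simpa only [Fintype.card_fin] using
      prod_le_pow_card_of_sum_sq_le (B *ᵥ u) (opNormR_nonneg B) hsq
  have hone : 1 ≤ √(∏ j, (s j : ℝ) ^ s j) :=
    Real.one_le_sqrt.mpr (one_le_prod fun j _ => one_le_natCast_pow_self (s j))
  calc ∏ i, ∑ j, √(s j) * B i j = ∏ i, (B *ᵥ u) i := by rw [← hrows]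
    _ ≤ opNormR B ^ n := hBu
    _ ≤ √(∏ j, (s j : ℝ) ^ s j) * opNormR B ^ n :=
      le_mul_of_one_le_left (pow_nonneg (opNormR_nonneg B) n) hone

/-- Let `B` be `n × k` with nonnegative real entries and `s_1,…,s_k > 0` summing to `n`.
Then `∑_{σ:[n]→[k]} (∏_i b_{i,σ(i)})·√(s_{σ(1)}⋯s_{σ(n)}) = ∏_i (√(s_1)b_{i,1}+⋯+√(s_k)b_{i,k})`,
and this quantity is at most `√(s_1^{s_1}⋯s_k^{s_k})·‖B‖^n`. -/
theorem sum_over_functions_eq_genGlynn (n k : ℕ) (s : Fin k → ℕ)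
    (hpos : ∀ j, 0 < s j) (hsum : ∑ j, s j = n)
    (B : Matrix (Fin n) (Fin k) ℝ) (hB : ∀ i j, 0 ≤ B i j) :
    (∑ σ : Fin n → Fin k, (∏ i, B i (σ i)) * Real.sqrt (∏ i, (s (σ i) : ℝ)))
        = (∏ i, ∑ j, Real.sqrt (s j) * B i j) ∧
      (∏ i, ∑ j, Real.sqrt (s j) * B i j)
        ≤ Real.sqrt (∏ j, (s j : ℝ) ^ s j) * opNormR B ^ n :=
  sum_over_functions_eq_genGlynn_general n k s hsum B
end

section
/- Let λ be a unit-norm complex number that is π/4-strong (|arg λ| ≥ π/4), and let Λ be any unit-norm complex number. Then at least one of Λ and λΛ is π/8-strong; hence if b ∈ {0,1} is a uniform random bit, λ^b Λ is π/8-strong with probability at least 1/2. -/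
/-! Taken modulo `2π`, arguments add under multiplication, and `|θ.toReal|` is subadditive on
angles; hence `|arg λ| ≤ |arg (λΛ)| + |arg Λ|`, so two arguments below `π/8` would force
`|arg λ| < π/4`. -/

namespace Real.Angle

theorem abs_toReal_add_le (θ ψ : Angle) : |(θ + ψ).toReal| ≤ |θ.toReal| + |ψ.toReal| := by
  by_cases h : θ.toReal + ψ.toReal ∈ Set.Ioc (-π) π
  · have hsum : ((θ.toReal + ψ.toReal : ℝ) : Angle) = θ + ψ := by simp
    rw [← hsum, toReal_coe_eq_self_iff_mem_Ioc.2 h]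
    exact abs_add_le _ _
  · have hpi : π ≤ |θ.toReal + ψ.toReal| := by
      rw [Set.mem_Ioc, not_and_or, not_lt, not_le] at h
      rcases h with h | h
      · rw [abs_of_neg (by linarith [pi_pos])]; linarith
      · rw [abs_of_pos (by linarith [pi_pos])]; linarith
    linarith [abs_toReal_le_pi (θ + ψ), abs_add_le θ.toReal ψ.toReal]

end Real.Angle

namespace Complex

theorem abs_arg_mul_le (z w : ℂ) : |arg (z * w)| ≤ |arg z| + |arg w| := by
  rcases eq_or_ne z 0 with rfl | hz
  · simp
  rcases eq_or_ne w 0 with rfl | hw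
  · simp
  have h := Real.Angle.abs_toReal_add_le (arg z) (arg w)
  rwa [← arg_mul_coe_angle hz hw, arg_coe_angle_toReal_eq_arg, arg_coe_angle_toReal_eq_arg,
    arg_coe_angle_toReal_eq_arg] at h

theorem abs_arg_le_abs_arg_mul_add (z : ℂ) {w : ℂ} (hw : w ≠ 0) :
    |arg z| ≤ |arg (z * w)| + |arg w| := by
  simpa [mul_inv_cancel_right₀ hw] using abs_arg_mul_le (z * w) w⁻¹

end Complex

theorem strong_shift_general (lam Lam : ℂ)
    (hLam : ‖Lam‖ = 1)
    (hstrong : Real.pi / 4 ≤ |Complex.arg lam|) :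
    (Real.pi / 8 ≤ |Complex.arg Lam| ∨ Real.pi / 8 ≤ |Complex.arg (lam * Lam)|) ∧
      (1 : ℝ) / 2 ≤
        ((if Real.pi / 8 ≤ |Complex.arg Lam| then (1 : ℝ) else 0) +
            (if Real.pi / 8 ≤ |Complex.arg (lam * Lam)| then (1 : ℝ) else 0)) / 2 := by
  have hLam0 : Lam ≠ 0 := norm_ne_zero_iff.1 (hLam ▸ one_ne_zero)
  have key : Real.pi / 8 ≤ |Complex.arg Lam| ∨ Real.pi / 8 ≤ |Complex.arg (lam * Lam)| := by
    by_contra! h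
    linarith [Complex.abs_arg_le_abs_arg_mul_add lam hLam0]
  refine ⟨key, ?_⟩
  rcases key with h | h <;> split_ifs <;> norm_num

/-- Let `λ` be unit-norm and `π/4`-strong (`|arg λ| ≥ π/4`), and `Λ` any unit-norm complex
number.  Then at least one of `Λ` and `λΛ` is `π/8`-strong; hence for a uniform random bit
`b ∈ {0,1}`, `λ^b Λ` is `π/8`-strong with probability at least `1/2`. -/
theorem strong_shift (lam Lam : ℂ)
    (hlam : ‖lam‖ = 1) (hLam : ‖Lam‖ = 1)
    (hstrong : Real.pi / 4 ≤ |Complex.arg lam|) :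
    (Real.pi / 8 ≤ |Complex.arg Lam| ∨ Real.pi / 8 ≤ |Complex.arg (lam * Lam)|) ∧
      (1 : ℝ) / 2 ≤
        ((if Real.pi / 8 ≤ |Complex.arg Lam| then (1 : ℝ) else 0) +
            (if Real.pi / 8 ≤ |Complex.arg (lam * Lam)| then (1 : ℝ) else 0)) / 2 :=
  strong_shift_general lam Lam hLam hstrong
end

section
/- Let ξ be an m-th root of unity with ξ ≠ 1, m ≥ 2, and let c be any fixed unit-norm complex number. If f is chosen uniformly at random from {0,1,…,m−1}, then the probability that ξ^f · c is π/4-strong is at least 1/4. -/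
/-!
The points `ξ ^ f * c`, `f < m`, are unit vectors summing to `c (ξ ^ m - 1) / (ξ - 1) = 0`.
A point that is not `π/4`-strong has real part greater than `cos (π/4) > 1/2`, while every point
has real part at least `-1`. Since the real parts sum to zero, there are at most twice as many
weak points as strong ones, so at least a third of the points are strong.
-/

open Finset Complex

lemma Complex.norm_div_two_le_re_of_abs_arg_lt {z : ℂ} (h : |arg z| < Real.pi / 4) :
    ‖z‖ / 2 ≤ z.re := by
  have hcos : Real.cos (Real.pi / 4) < Real.cos (arg z) := by
    rw [← Real.cos_abs (arg z)]
    exact Real.cos_lt_cos_of_nonneg_of_le_pi (abs_nonneg _) (by linarith [Real.pi_pos]) h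
  have hsqrt : (1 : ℝ) < Real.sqrt 2 := by
    rw [show (1 : ℝ) = Real.sqrt 1 by simp]
    exact Real.sqrt_lt_sqrt zero_le_one one_lt_two
  rw [Real.cos_pi_div_four] at hcos
  rw [← norm_mul_cos_arg z]
  nlinarith [norm_nonneg z]

lemma card_le_three_mul_card_filter_of_sum_eq_zero {ι : Type*} (s : Finset ι) (p : ι → Prop)
    [DecidablePred p] (a : ι → ℝ) (hsum : ∑ i ∈ s, a i = 0)
    (hp : ∀ i ∈ s, p i → -1 ≤ a i) (hnp : ∀ i ∈ s, ¬ p i → 1 / 2 ≤ a i) :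
    (#s : ℝ) ≤ 3 * #(s.filter p) := by
  have hstrong : -(#(s.filter p) : ℝ) ≤ ∑ i ∈ s.filter p, a i := by
    simpa using card_nsmul_le_sum (s.filter p) a (-1) (by simpa using hp)
  have hweak : (#(s.filter (¬ p ·)) : ℝ) * (1 / 2) ≤ ∑ i ∈ s.filter (¬ p ·), a i := by
    simpa using card_nsmul_le_sum (s.filter (¬ p ·)) a (1 / 2) (by simpa using hnp)
  have hcard : (#(s.filter p) : ℝ) + #(s.filter (¬ p ·)) = #s := by
    exact_mod_cast card_filter_add_card_filter_not p
  rw [← sum_filter_add_sum_filter_not s p] at hsum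
  linarith

lemma sum_range_pow_mul_eq_zero {ξ : ℂ} {m : ℕ} (hξ : ξ ^ m = 1) (hξ1 : ξ ≠ 1) (c : ℂ) :
    ∑ f ∈ range m, ξ ^ f * c = 0 := by
  rw [← sum_mul, geom_sum_eq hξ1, hξ, sub_self, zero_div, zero_mul]

/-- Let `ξ ≠ 1` be an `m`-th root of unity, `m ≥ 2`, and `c` any fixed unit-norm complex
number.  If `f` is uniform on `{0,…,m−1}`, then `ξ^f·c` is `π/4`-strong
(`|arg(ξ^f·c)| ≥ π/4`) with probability at least `1/4`. -/
theorem root_shift_strong (m : ℕ) (hm : 2 ≤ m) (ξ c : ℂ)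
    (hξ : ξ ^ m = 1) (hξ1 : ξ ≠ 1) (hc : ‖c‖ = 1) :
    (1 : ℝ) / 4 ≤
      (((Finset.range m).filter fun f => Real.pi / 4 ≤ |Complex.arg (ξ ^ f * c)|).card : ℝ)
        / m := by
  have hnorm : ∀ f, ‖ξ ^ f * c‖ = 1 := fun f => by
    rw [norm_mul, norm_pow, norm_eq_one_of_pow_eq_one hξ (by omega), hc, one_pow, one_mul]
  have hthird := card_le_three_mul_card_filter_of_sum_eq_zero (range m)
    (fun f => Real.pi / 4 ≤ |arg (ξ ^ f * c)|) (fun f => (ξ ^ f * c).re)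
    (by rw [← re_sum, sum_range_pow_mul_eq_zero hξ hξ1, zero_re])
    (fun f _ _ => by
      have := abs_re_le_norm (ξ ^ f * c)
      rw [hnorm f] at this
      exact (abs_le.1 this).1)
    (fun f _ hweak => by
      have := norm_div_two_le_re_of_abs_arg_lt (not_le.1 hweak)
      rwa [hnorm f] at this)
  rw [card_range] at hthird
  have hm0 : (0 : ℝ) < m := by exact_mod_cast (by omega : 0 < m)
  rw [le_div_iff₀ hm0]
  linarith
end
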